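/- Let V : ℝ^d → ℝ be a norm-like C² function (V(x) → ∞ as |x| → ∞) with V ≥ 1 and suppose there exist η > 0 and a function F̂ⁿ such that F̂ⁿ(x)·∇V(x) ≤ -η(V(x) - V(0)) and V(x) > V(0) for all x ≠ 0. Suppose additionally limsup_{|x|→∞} |D²V(x)|/V(x) = 0 and sup_n |āⁿ(0)| =: C_a < ∞. Then there exist δ > 0, b < ∞ and K < ∞ (independent of n) such that the generator 𝒜ⁿ f = F̂ⁿ·∇f + (1/2)Σ_{ij} āⁿ_{ij}(0) ∂²_{ij} f satisfies 𝒜ⁿ V(x) ≤ -δ V(x) + b·1_{|x| ≤ K}(x) for all x ∈ ℝ^d and all n. -/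
import Mathlib


open Filter

/-- FM and DM stability (Lemma 3.7): a fluid-model Lyapunov function whose Hessian
grows slower than the function itself satisfies the uniform Lyapunov condition (UL)
for the sequence of diffusion-model generators. -/
theorem stmt7 {d : ℕ} (V : (Fin d → ℝ) → ℝ)
    (Fhat : ℕ → (Fin d → ℝ) → (Fin d → ℝ))
    (a : ℕ → Matrix (Fin d) (Fin d) ℝ)
    (η C_a : ℝ) (hη : 0 < η)
    (hV2 : ContDiff ℝ 2 V) (hV1 : ∀ x, 1 ≤ V x)
    (hnorm : Tendsto V (cocompact (Fin d → ℝ)) atTop)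
    (hVpos : ∀ x, x ≠ 0 → V 0 < V x)
    (hdrift : ∀ n x, x ≠ 0 →
      ∑ i, Fhat n x i * fderiv ℝ V x (Pi.single i 1) ≤ -η * (V x - V 0))
    (hCa : ∀ n i j, |a n i j| ≤ C_a)
    (hhess : ∀ ε > (0:ℝ), ∃ R : ℝ, ∀ x, R ≤ ‖x‖ →
      ∑ i, ∑ j, |fderiv ℝ (fun y => fderiv ℝ V y (Pi.single j 1)) x (Pi.single i 1)|
        ≤ ε * V x) :
    ∃ δ > (0:ℝ), ∃ b K : ℝ, ∀ n x,
      (∑ i, Fhat n x i * fderiv ℝ V x (Pi.single i 1))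
        + (1/2) * ∑ i, ∑ j, a n i j *
            fderiv ℝ (fun y => fderiv ℝ V y (Pi.single j 1)) x (Pi.single i 1)
      ≤ -δ * V x + (if ‖x‖ ≤ K then b else 0) := by
    classical
  set C : ℝ := max C_a 0 with hCdef
  have hC0 : 0 ≤ C := le_max_right _ _
  have hCa' : ∀ n i j, |a n i j| ≤ C := fun n i j => (hCa n i j).trans (le_max_left _ _)
  set ε : ℝ := η / (2 * (C + 1)) with hεdef
  have hεpos : 0 < ε := div_pos hη (by positivity)
  have hεeq : ε * (2 * (C + 1)) = η := div_mul_cancel₀ _ (by positivity)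
  have hCε : C * ε ≤ η / 2 := by nlinarith [hεpos.le, hC0]
  obtain ⟨R, hR⟩ := hhess ε hεpos
  -- radius beyond which V x ≥ 2 * V 0
  have h2 : ∀ᶠ x in cocompact (Fin d → ℝ), 2 * V 0 ≤ V x :=
    hnorm.eventually (eventually_ge_atTop _)
  rw [Filter.eventually_iff, Filter.mem_cocompact] at h2
  obtain ⟨t, ht, hts⟩ := h2
  obtain ⟨r, hr⟩ := ht.isBounded.subset_closedBall 0
  have hR2 : ∀ x : Fin d → ℝ, r + 1 ≤ ‖x‖ → 2 * V 0 ≤ V x := by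
    intro x hx
    by_cases hxt : x ∈ t
    · have := mem_closedBall_zero_iff.mp (hr hxt)
      linarith
    · exact hts hxt
  -- gradient vanishes at 0
  have hdV0 : fderiv ℝ V 0 = 0 := by
    have hmin : IsLocalMin V 0 := by
      refine Filter.Eventually.of_forall fun x => ?_
      rcases eq_or_ne x 0 with h | h
      · simp [h]
      · exact (hVpos x h).le
    exact hmin.fderiv_eq_zero
  -- drift term is nonpositive everywhere
  have hdrift0 : ∀ n x, ∑ i, Fhat n x i * fderiv ℝ V x (Pi.single i 1) ≤ 0 := by
    intro n x
    rcases eq_or_ne x 0 with h | h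
    · subst h; simp [hdV0]
    · have := hdrift n x h
      have hVx := hVpos x h
      nlinarith
  -- abbreviations
  set H : (Fin d → ℝ) → Fin d → Fin d → ℝ := fun x i j =>
    fderiv ℝ (fun y => fderiv ℝ V y (Pi.single j 1)) x (Pi.single i 1) with hHdef
  set g : (Fin d → ℝ) → ℝ := fun x => ∑ i, ∑ j, |H x i j| with hgdef
  have hgR : ∀ x, R ≤ ‖x‖ → g x ≤ ε * V x := hR
  have hhessb : ∀ n x, ∑ i, ∑ j, a n i j * H x i j ≤ C * g x := by
    intro n x
    rw [hgdef]
    simp only [Finset.mul_sum]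
    refine Finset.sum_le_sum fun i _ => Finset.sum_le_sum fun j _ => ?_
    calc a n i j * H x i j ≤ |a n i j * H x i j| := le_abs_self _
      _ = |a n i j| * |H x i j| := abs_mul _ _
      _ ≤ C * |H x i j| := mul_le_mul_of_nonneg_right (hCa' n i j) (abs_nonneg _)
  -- continuity of g and V, to bound them on a ball
  have hfd1 : ContDiff ℝ 1 (fderiv ℝ V) := hV2.fderiv_right (by norm_num)
  have hgcont : Continuous g := by
    rw [hgdef]
    refine continuous_finset_sum _ fun i _ => continuous_finset_sum _ fun j _ => ?_
    have hj : ContDiff ℝ 1 fun y => fderiv ℝ V y (Pi.single j 1) :=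
      hfd1.clm_apply contDiff_const
    have hcont : Continuous (fderiv ℝ fun y => fderiv ℝ V y (Pi.single j 1)) :=
      (hj.fderiv_right (m := 0) (by norm_num)).continuous
    exact (hcont.clm_apply continuous_const).abs
  set K : ℝ := max (max R (r + 1)) 0 with hKdef
  obtain ⟨M, hM⟩ := (isCompact_closedBall (0 : Fin d → ℝ) K).exists_bound_of_continuousOn
    hgcont.continuousOn
  obtain ⟨MV, hMV⟩ := (isCompact_closedBall (0 : Fin d → ℝ) K).exists_bound_of_continuousOn
    hV2.continuous.continuousOn
  refine ⟨η / 4, by positivity, (1/2) * C * M + (η/4) * MV, K, fun n x => ?_⟩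
  by_cases hxK : ‖x‖ ≤ K
  · -- bounded region
    have hxball : x ∈ Metric.closedBall (0 : Fin d → ℝ) K := by
      simpa [mem_closedBall_zero_iff] using hxK
    have hgM : g x ≤ M := (le_abs_self _).trans_eq (Real.norm_eq_abs _).symm |>.trans (hM x hxball)
    have hVM : V x ≤ MV := (le_abs_self _).trans_eq (Real.norm_eq_abs _).symm |>.trans (hMV x hxball)
    have h1 := hdrift0 n x
    have h2 := hhessb n x
    simp only [if_pos hxK]
    nlinarith [hη.le, hC0]
  · -- far region
    push_neg at hxK
    have hxR : R ≤ ‖x‖ := le_of_lt (lt_of_le_of_lt (le_max_of_le_left (le_max_left _ _)) hxK)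
    have hxr : r + 1 ≤ ‖x‖ := le_of_lt (lt_of_le_of_lt (le_max_of_le_left (le_max_right _ _)) hxK)
    have hx0 : x ≠ 0 := by
      intro h
      rw [h, norm_zero] at hxK
      exact absurd hxK (not_lt.mpr (le_max_right _ _))
    have h1 := hdrift n x hx0
    have h2 := hhessb n x
    have h3 := hgR x hxR
    have h4 := hR2 x hxr
    have hVxpos : (0:ℝ) < V x := lt_of_lt_of_le one_pos (hV1 x)
    have h5 : C * g x ≤ (η / 2) * V x := by
      calc C * g x ≤ C * (ε * V x) := by
            rcases eq_or_lt_of_le hC0 with h | h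
            · simp [← h]
            · exact mul_le_mul_of_nonneg_left h3 hC0
        _ = (C * ε) * V x := by ring
        _ ≤ (η / 2) * V x := mul_le_mul_of_nonneg_right hCε hVxpos.le
    simp only [if_neg (not_le.mpr hxK)]
    nlinarith
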